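/- Optimality of myopic policies for SEP-POMDPs. Assume: (i) the cost is separable, i.e. there exist K : Y → A → ℝ and L : S → Y → ℝ with c s y' a = K y' a + L s y' for all s, y', a; (ii) the state transitions do not depend on the current state, i.e. there exists p̄ : Y → A → S → ℝ with p y' s a s' = p̄ y' a s' for all y', s, a, s'; (iii) a* : B → A satisfies, for every b ∈ B, G(b, a*(b)) ≤ G(b, a) for all a ∈ A, where G(b, a) = Σ_{y'} σ(y' | b) * ( K y' a + β * Σ_{y''} σ(y'' | λ(y', b)) * Σ_{s'} p̄ y' a s' * L s' y'' ); (iv) a*(b) ∈ 𝒜 s for every s ∈ S and every b ∈ B. Define the policy-evaluation operator H^{a*} on bounded functions v : S × B → ℝ by (H^{a*} v)(s, b) = Σ_{y'} σ(y' | b) * ( c s y' (a*(b)) + β * Σ_{s'} p y' s (a*(b)) s' * v(s', λ(y', b)) ), a β-contraction with unique bounded fixed point v^{a*}. Then the stationary myopic policy π(s, b) = a*(b) is optimal: v^{a*}(s, b) = v*(s, b) for all (s, b) ∈ S × B. -/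

import Mathlib

open Finset

/-- The belief simplex over the modulation space `M`. -/
abbrev Belief (M : Type) [Fintype M] : Type :=
  {b : M → ℝ // (∀ μ, 0 ≤ b μ) ∧ ∑ μ, b μ = 1}

/-- A finite SEP-POMDP: feasible action sets, cost function, state transition
probabilities, modulation/observation probabilities, and a discount factor. -/
structure SEP (S Y M A : Type) [Fintype S] [Fintype Y] [Fintype M] [Fintype A] where
  act : S → Finset A
  act_ne : ∀ s, (act s).Nonempty
  c : S → Y → A → ℝ
  p : Y → S → A → S → ℝ
  p_nonneg : ∀ y' s a s', 0 ≤ p y' s a s'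
  p_sum : ∀ y' s a, ∑ s', p y' s a s' = 1
  Q : M → Y → M → ℝ
  Q_nonneg : ∀ μ y' μ', 0 ≤ Q μ y' μ'
  Q_sum : ∀ μ, ∑ y', ∑ μ', Q μ y' μ' = 1
  β : ℝ
  β_nonneg : 0 ≤ β
  β_lt_one : β < 1

namespace SEP

variable {S Y M A : Type} [Fintype S] [Fintype Y] [Fintype M] [Fintype A]

/-- `σ(y' | b) = ∑ μ, ∑ μ', b μ * Q μ y' μ'`. -/
def sig (P : SEP S Y M A) (b : Belief M) (y' : Y) : ℝ :=
  ∑ μ, ∑ μ', b.1 μ * P.Q μ y' μ'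

/-- The Bayesian belief update `λ(y', b)`. -/
noncomputable def lam (P : SEP S Y M A) (y' : Y) (b : Belief M) : Belief M :=
  if h : 0 < P.sig b y' then
    ⟨fun μ' => (∑ μ, b.1 μ * P.Q μ y' μ') / P.sig b y',
      fun μ' => div_nonneg (Finset.sum_nonneg fun μ _ =>
        mul_nonneg (b.2.1 μ) (P.Q_nonneg μ y' μ')) h.le,
      by
        rw [← Finset.sum_div, Finset.sum_comm]
        exact div_self (ne_of_gt h)⟩
  else b

/-- `h_{y'}(s, a, v̄) = c s y' a + β * ∑ s', p y' s a s' * v̄ s'`. -/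
def hy (P : SEP S Y M A) (y' : Y) (s : S) (a : A) (vb : S → ℝ) : ℝ :=
  P.c s y' a + P.β * ∑ s', P.p y' s a s' * vb s'

/-- The Bellman operator `H` of the SEP-POMDP. -/
noncomputable def H (P : SEP S Y M A) (v : S → Belief M → ℝ) (s : S) (b : Belief M) : ℝ :=
  (P.act s).inf' (P.act_ne s) fun a =>
    ∑ y', P.sig b y' * P.hy y' s a fun s' => v s' (P.lam y' b)

/-- Boundedness of a function `v : S × B → ℝ`. -/
def Bdd (v : S → Belief M → ℝ) : Prop :=
  ∃ C, ∀ s b, |v s b| ≤ C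

end SEP


/-!
Under separable costs and state-independent transitions, every function of the form
`v s b = g b + ∑ y', σ(y' | b) * L s y'` has Bellman objective `G(b, a) + R(s, b)`, where `G` is
the myopic objective and `R` does not depend on the action. The value `vA` of the myopic policy
has this form, so the minimum in `H vA` is attained at `a*(b)` and `vA` is a fixed point of `H`.
Since `H` is a `β`-contraction in the sup norm, its bounded fixed point is unique, whence `vA = v*`.
-/

theorem Finset.abs_inf'_sub_inf'_le {ι α : Type*} [AddCommGroup α] [LinearOrder α]
    [IsOrderedAddMonoid α] {s : Finset ι} (hs : s.Nonempty) {f g : ι → α} {D : α}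
    (h : ∀ i ∈ s, |f i - g i| ≤ D) : |s.inf' hs f - s.inf' hs g| ≤ D := by
  have sub_le : ∀ f g : ι → α, (∀ i ∈ s, f i - g i ≤ D) → s.inf' hs f - s.inf' hs g ≤ D := by
    intro f g h
    rw [sub_le_comm]
    exact Finset.le_inf' _ _ fun i hi =>
      (sub_le_sub_right (Finset.inf'_le f hi) D).trans (sub_le_comm.1 (h i hi))
  exact abs_sub_le_iff.2 ⟨sub_le f g fun i hi => (abs_sub_le_iff.1 (h i hi)).1,
    sub_le g f fun i hi => (abs_sub_le_iff.1 (h i hi)).2⟩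

theorem Finset.abs_sum_mul_le_of_sum_eq_one {ι : Type*} {s : Finset ι} {w x : ι → ℝ} {D : ℝ}
    (hw : ∀ i ∈ s, 0 ≤ w i) (hw_sum : ∑ i ∈ s, w i = 1) (hx : ∀ i ∈ s, |x i| ≤ D) :
    |∑ i ∈ s, w i * x i| ≤ D :=
  calc |∑ i ∈ s, w i * x i| ≤ ∑ i ∈ s, |w i * x i| := Finset.abs_sum_le_sum_abs _ _
    _ ≤ ∑ i ∈ s, w i * D := Finset.sum_le_sum fun i hi => by
        rw [abs_mul, abs_of_nonneg (hw i hi)]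
        exact mul_le_mul_of_nonneg_left (hx i hi) (hw i hi)
    _ = D := by rw [← Finset.sum_mul, hw_sum, one_mul]

theorem eq_zero_of_abs_le_mul_of_bounded {ι : Type*} {d : ι → ℝ} {β C : ℝ}
    (hβ_nonneg : 0 ≤ β) (hβ_lt_one : β < 1) (hC : ∀ i, |d i| ≤ C)
    (hcontract : ∀ D, (∀ i, |d i| ≤ D) → ∀ i, |d i| ≤ β * D) (i : ι) : d i = 0 := by
  have hpow : ∀ n : ℕ, ∀ i, |d i| ≤ β ^ n * C := by
    intro n
    induction n with
    | zero => simpa using hC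
    | succ n ih => simpa [pow_succ', mul_assoc] using hcontract _ ih
  have hlim : Filter.Tendsto (fun n : ℕ => β ^ n * C) Filter.atTop (nhds 0) := by
    simpa using (tendsto_pow_atTop_nhds_zero_of_lt_one hβ_nonneg hβ_lt_one).mul_const C
  exact abs_nonpos_iff.1 (ge_of_tendsto' hlim fun n => hpow n i)

namespace SEP

variable {S Y M A : Type} [Fintype S] [Fintype Y] [Fintype M] [Fintype A] (P : SEP S Y M A)

theorem sig_nonneg (b : Belief M) (y' : Y) : 0 ≤ P.sig b y' :=
  Finset.sum_nonneg fun μ _ => Finset.sum_nonneg fun μ' _ =>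
    mul_nonneg (b.2.1 μ) (P.Q_nonneg μ y' μ')

theorem sum_sig (b : Belief M) : ∑ y', P.sig b y' = 1 := by
  unfold sig
  rw [Finset.sum_comm]
  simp_rw [← Finset.mul_sum, P.Q_sum, mul_one]
  exact b.2.2

/-- `P.H v s b` is, definitionally, the `inf'` of `P.actionValue v s b` over `P.act s`. -/
noncomputable def actionValue (v : S → Belief M → ℝ) (s : S) (b : Belief M) (a : A) : ℝ :=
  ∑ y', P.sig b y' * P.hy y' s a fun s' => v s' (P.lam y' b)

/-- The myopic objective `G(b, a)`. -/
noncomputable def myopicCost (K : Y → A → ℝ) (L : S → Y → ℝ) (pbar : Y → A → S → ℝ)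
    (b : Belief M) (a : A) : ℝ :=
  ∑ y', P.sig b y' * (K y' a +
    P.β * ∑ y'', P.sig (P.lam y' b) y'' * ∑ s', pbar y' a s' * L s' y'')

theorem abs_actionValue_sub_le {v w : S → Belief M → ℝ} {D : ℝ}
    (h : ∀ s b, |v s b - w s b| ≤ D) (s : S) (b : Belief M) (a : A) :
    |P.actionValue v s b a - P.actionValue w s b a| ≤ P.β * D := by
  have hdiff : P.actionValue v s b a - P.actionValue w s b a =
      ∑ y', P.sig b y' * (P.β * ∑ s', P.p y' s a s' *
        (v s' (P.lam y' b) - w s' (P.lam y' b))) := by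
    simp only [actionValue, hy, ← Finset.sum_sub_distrib, mul_sub]
    exact Finset.sum_congr rfl fun _ _ => by rw [Finset.sum_sub_distrib]; ring
  rw [hdiff]
  refine Finset.abs_sum_mul_le_of_sum_eq_one (fun y' _ => P.sig_nonneg b y')
    (P.sum_sig b) fun y' _ => ?_
  rw [abs_mul, abs_of_nonneg P.β_nonneg]
  exact mul_le_mul_of_nonneg_left (Finset.abs_sum_mul_le_of_sum_eq_one
    (fun s' _ => P.p_nonneg y' s a s') (P.p_sum y' s a) fun s' _ => h s' _) P.β_nonneg

theorem abs_H_sub_le {v w : S → Belief M → ℝ} {D : ℝ}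
    (h : ∀ s b, |v s b - w s b| ≤ D) (s : S) (b : Belief M) :
    |P.H v s b - P.H w s b| ≤ P.β * D :=
  Finset.abs_inf'_sub_inf'_le _ fun a _ => P.abs_actionValue_sub_le h s b a

theorem eq_of_bdd_of_fixed_H {v w : S → Belief M → ℝ} (hv : Bdd v) (hw : Bdd w)
    (hv_fix : ∀ s b, v s b = P.H v s b) (hw_fix : ∀ s b, w s b = P.H w s b)
    (s : S) (b : Belief M) : v s b = w s b := by
  obtain ⟨Cv, hCv⟩ := hv
  obtain ⟨Cw, hCw⟩ := hw
  have hzero := eq_zero_of_abs_le_mul_of_bounded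
    (d := fun x : S × Belief M => v x.1 x.2 - w x.1 x.2) (C := Cv + Cw) P.β_nonneg P.β_lt_one
    (fun x => (abs_sub _ _).trans (add_le_add (hCv x.1 x.2) (hCw x.1 x.2)))
    (fun D hD x => by
      rw [hv_fix, hw_fix]
      exact P.abs_H_sub_le (fun s b => hD (s, b)) x.1 x.2)
    (s, b)
  exact sub_eq_zero.1 hzero

section Separable

variable {P} {K : Y → A → ℝ} {L : S → Y → ℝ} {pbar : Y → A → S → ℝ}

theorem actionValue_eq_myopicCost_add (hc : ∀ s y' a, P.c s y' a = K y' a + L s y')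
    (hp : ∀ y' s a s', P.p y' s a s' = pbar y' a s') {v : S → Belief M → ℝ} (g : Belief M → ℝ)
    (hv : ∀ s b, v s b = g b + ∑ y', P.sig b y' * L s y') (s : S) (b : Belief M) (a : A) :
    P.actionValue v s b a = P.myopicCost K L pbar b a +
      ∑ y', P.sig b y' * (L s y' + P.β * g (P.lam y' b)) := by
  have hnext : ∀ y' (b' : Belief M), ∑ s', pbar y' a s' * v s' b' =
      g b' + ∑ y'', P.sig b' y'' * ∑ s', pbar y' a s' * L s' y'' := by
    intro y' b'
    have hpbar : ∑ s', pbar y' a s' = 1 := by simpa only [hp] using P.p_sum y' s a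
    simp only [hv, mul_add, Finset.sum_add_distrib, ← Finset.sum_mul, hpbar, one_mul,
      Finset.mul_sum]
    rw [Finset.sum_comm]
    exact congrArg _ (Finset.sum_congr rfl fun _ _ => Finset.sum_congr rfl fun _ _ => by ring)
  simp only [actionValue, myopicCost, hy, hc, hp, hnext, ← Finset.sum_add_distrib]
  exact Finset.sum_congr rfl fun _ _ => by ring

theorem exists_separable_of_policy_eval (hc : ∀ s y' a, P.c s y' a = K y' a + L s y')
    (hp : ∀ y' s a s', P.p y' s a s' = pbar y' a s') {astar : Belief M → A}
    {v : S → Belief M → ℝ} (hv : ∀ s b, v s b = P.actionValue v s b (astar b)) :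
    ∃ g : Belief M → ℝ, ∀ s b, v s b = g b + ∑ y', P.sig b y' * L s y' := by
  refine ⟨fun b => ∑ y', P.sig b y' * (K y' (astar b) +
    P.β * ∑ s', pbar y' (astar b) s' * v s' (P.lam y' b)), fun s b => ?_⟩
  conv_lhs => rw [hv]
  simp only [actionValue, hy, hc, hp, ← Finset.sum_add_distrib]
  exact Finset.sum_congr rfl fun _ _ => by ring

theorem eq_H_of_myopic (hc : ∀ s y' a, P.c s y' a = K y' a + L s y')
    (hp : ∀ y' s a s', P.p y' s a s' = pbar y' a s') {astar : Belief M → A}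
    (hmyopic : ∀ b a, P.myopicCost K L pbar b (astar b) ≤ P.myopicCost K L pbar b a)
    (hfeas : ∀ s b, astar b ∈ P.act s)
    {v : S → Belief M → ℝ} (hv : ∀ s b, v s b = P.actionValue v s b (astar b))
    (s : S) (b : Belief M) : v s b = P.H v s b := by
  obtain ⟨g, hg⟩ := exists_separable_of_policy_eval hc hp hv
  refine le_antisymm ?_ ((Finset.inf'_le _ (hfeas s b)).trans (hv s b).ge)
  refine Finset.le_inf' _ _ fun a _ => ?_
  change v s b ≤ P.actionValue v s b a
  rw [hv, actionValue_eq_myopicCost_add hc hp g hg, actionValue_eq_myopicCost_add hc hp g hg]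
  exact add_le_add_left (hmyopic b a) _

end Separable

end SEP

theorem myopic_policy_optimal_general {S Y M A : Type} [Fintype S] [Fintype Y] [Fintype M] [Fintype A]
    (P : SEP S Y M A)
    -- (i) separable cost
    (K : Y → A → ℝ) (L : S → Y → ℝ)
    (hc : ∀ s y' a, P.c s y' a = K y' a + L s y')
    -- (ii) state-independent transitions
    (pbar : Y → A → S → ℝ)
    (hp : ∀ y' s a s', P.p y' s a s' = pbar y' a s')
    -- (iii) astar b minimizes G(b, ·)
    (astar : Belief M → A)
    (hmyopic : ∀ (b : Belief M) (a : A),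
      (∑ y', P.sig b y' * (K y' (astar b) +
        P.β * ∑ y'', P.sig (P.lam y' b) y'' * ∑ s', pbar y' (astar b) s' * L s' y'')) ≤
      ∑ y', P.sig b y' * (K y' a +
        P.β * ∑ y'', P.sig (P.lam y' b) y'' * ∑ s', pbar y' a s' * L s' y''))
    -- (iv) astar b is always feasible
    (hfeas : ∀ (s : S) (b : Belief M), astar b ∈ P.act s)
    -- the policy-evaluation fixed point of the myopic policy
    (vA : S → Belief M → ℝ) (hvAbdd : SEP.Bdd vA)
    (hvA : ∀ s b, vA s b = ∑ y', P.sig b y' *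
      (P.c s y' (astar b) + P.β * ∑ s', P.p y' s (astar b) s' * vA s' (P.lam y' b)))
    -- the unique bounded fixed point of H
    (vstar : S → Belief M → ℝ) (hbdd : SEP.Bdd vstar)
    (hfix : ∀ s b, vstar s b = P.H vstar s b) :
    ∀ s b, vA s b = vstar s b := by
  have hvA_fix : ∀ s b, vA s b = P.H vA s b := P.eq_H_of_myopic hc hp hmyopic hfeas hvA
  exact P.eq_of_bdd_of_fixed_H hvAbdd hbdd hvA_fix hfix

/-- **Optimality of myopic policies for SEP-POMDPs.** If the cost is separable,
the transitions do not depend on the current state, and `astar b` minimizes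
the myopic objective `G(b, ·)` and is always feasible, then the stationary
myopic policy `π(s, b) = astar b` is optimal: its policy evaluation `vA`
coincides with the optimal value function `vstar`. -/
theorem myopic_policy_optimal {S Y M A : Type} [Fintype S] [Fintype Y] [Fintype M] [Fintype A]
    [Nonempty S] [Nonempty Y] [Nonempty M] [Nonempty A]
    (P : SEP S Y M A)
    -- (i) separable cost
    (K : Y → A → ℝ) (L : S → Y → ℝ)
    (hc : ∀ s y' a, P.c s y' a = K y' a + L s y')
    -- (ii) state-independent transitions
    (pbar : Y → A → S → ℝ)
    (hp : ∀ y' s a s', P.p y' s a s' = pbar y' a s')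
    -- (iii) astar b minimizes G(b, ·)
    (astar : Belief M → A)
    (hmyopic : ∀ (b : Belief M) (a : A),
      (∑ y', P.sig b y' * (K y' (astar b) +
        P.β * ∑ y'', P.sig (P.lam y' b) y'' * ∑ s', pbar y' (astar b) s' * L s' y'')) ≤
      ∑ y', P.sig b y' * (K y' a +
        P.β * ∑ y'', P.sig (P.lam y' b) y'' * ∑ s', pbar y' a s' * L s' y''))
    -- (iv) astar b is always feasible
    (hfeas : ∀ (s : S) (b : Belief M), astar b ∈ P.act s)
    -- the policy-evaluation fixed point of the myopic policy
    (vA : S → Belief M → ℝ) (hvAbdd : SEP.Bdd vA)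
    (hvA : ∀ s b, vA s b = ∑ y', P.sig b y' *
      (P.c s y' (astar b) + P.β * ∑ s', P.p y' s (astar b) s' * vA s' (P.lam y' b)))
    -- the unique bounded fixed point of H
    (vstar : S → Belief M → ℝ) (hbdd : SEP.Bdd vstar)
    (hfix : ∀ s b, vstar s b = P.H vstar s b) :
    ∀ s b, vA s b = vstar s b :=
  myopic_policy_optimal_general P K L hc pbar hp astar hmyopic hfeas vA hvAbdd hvA vstar hbdd hfix
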